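/- arXiv:1405.2844 — 8 statements merged into one kernel-verified Lean document; each statement's English description precedes it below -/
import Mathlib

section
/- For every real ε > 0 there exists N such that for all n ≥ N there is a k with k ≤ 32.03·(1+ε)·(log n / log 2) and a 3-covering array with k rows and n columns over the alphabet Fin 3; i.e., a matrix M : Fin k → Fin n → Fin 3 such that for every injective tuple of 3 column indices c : Fin 3 → Fin n and every word w : Fin 3 → Fin 3 there exists a row r : Fin k with M r (c i) = w i for all i : Fin 3. -/
/-!
A *package* is a pair `(x, u)` of vectors over `𝔽₃` indexed by the columns; it contributes the
18 rows `a • x + b + s • u` with `a ≠ 0`, and three constant rows take care of the constant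
words. On three fixed columns, a non-constant word `w` is missed by the rows of at most 333 of
the 729 possible restrictions of a package (a finite check; the set of such restrictions only
depends on `w` up to `w ↦ a • w + b`). Take `2n` columns and `K` independent uniform packages:
the expected number of pairs (injective column triple, non-constant word) missed by every
package is at most `27 (2n)³ (333/729)^K`, which is at most `n` once `(729/333)^K ≥ 216 n²`.
Deleting one column of each missed pair leaves `n` columns forming a covering array with
`18 K + 3` rows, and `(729/333)^8 ≥ 2^9` makes `K ≈ (16/9) log₂ n` enough, i.e. about
`32 log₂ n` rows.
-/

open Finset Function

section Covering

variable {ρ ρ' κ α : Type*} {t : ℕ}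

def CoversWord (M : ρ → κ → α) (c : Fin t → κ) (w : Fin t → α) : Prop :=
  ∃ r, ∀ i, M r (c i) = w i

instance [Fintype ρ] [DecidableEq α] (M : ρ → κ → α) (c : Fin t → κ) (w : Fin t → α) :
    Decidable (CoversWord M c w) :=
  inferInstanceAs (Decidable (∃ r, ∀ i, M r (c i) = w i))

def IsCoveringArray (t : ℕ) (M : ρ → κ → α) : Prop :=
  ∀ c : Fin t → κ, Injective c → ∀ w, CoversWord M c w

theorem IsCoveringArray.comp_surjective {M : ρ → κ → α} (hM : IsCoveringArray t M)
    {e : ρ' → ρ} (he : Surjective e) : IsCoveringArray t (M ∘ e) := by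
  intro c hc w
  obtain ⟨r, hr⟩ := hM c hc w
  obtain ⟨r', rfl⟩ := he r
  exact ⟨r', hr⟩

def withConstRows (M : ρ → κ → α) : ρ ⊕ α → κ → α :=
  Sum.elim M fun a _ ↦ a

theorem isCoveringArray_withConstRows {M : ρ → κ → α}
    (hM : ∀ c : Fin t → κ, Injective c → ∀ w, (∀ a, w ≠ const _ a) → CoversWord M c w) :
    IsCoveringArray t (withConstRows M) := by
  intro c hc w
  by_cases hw : ∀ a, w ≠ const _ a
  · obtain ⟨r, hr⟩ := hM c hc w hw
    exact ⟨.inl r, hr⟩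
  · obtain ⟨a, rfl⟩ := not_forall_not.mp hw
    exact ⟨.inr a, fun _ ↦ rfl⟩

end Covering

section Counting

theorem card_filter_comp_mem_mul_pow {β κ : Type*} [Fintype β] [DecidableEq β] [Fintype κ]
    [DecidableEq κ] {t : ℕ} {c : Fin t → κ} (hc : Injective c) (S : Finset (Fin t → β)) :
    #{x : κ → β | x ∘ c ∈ S} * Fintype.card β ^ t = #S * Fintype.card β ^ Fintype.card κ := by
  classical
  let e : (κ → β) ≃ (Fin t → β) × ({i // i ∉ Set.range c} → β) :=
    (Equiv.piEquivPiSubtypeProd (· ∈ Set.range c) _).trans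
      (Equiv.prodCongr ((Equiv.ofInjective c hc).arrowCongr (Equiv.refl β)).symm (Equiv.refl _))
  have he : ∀ x, (e x).1 = x ∘ c := fun x ↦ rfl
  have hcard :
      #{x : κ → β | x ∘ c ∈ S} = #(S ×ˢ (univ : Finset ({i // i ∉ Set.range c} → β))) := by
    rw [← card_map e.toEmbedding]
    congr 1
    ext ⟨y, z⟩
    simp only [mem_map_equiv, mem_filter, mem_univ, true_and, mem_product, and_true]
    rw [← he, e.apply_symm_apply]
  have hcompl : Fintype.card {i // i ∉ Set.range c} + t = Fintype.card κ := by
    rw [Fintype.card_subtype_compl, Set.card_range_of_injective hc, Fintype.card_fin]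
    have := Fintype.card_le_of_injective c hc
    simp only [Fintype.card_fin] at this
    omega
  rw [hcard, card_product, card_univ, Fintype.card_fun, mul_assoc, ← pow_add, hcompl]

theorem exists_card_filter_mul_le {Ω E : Type*} [Fintype Ω] [Nonempty Ω] [Fintype E]
    (bad : Ω → E → Prop) [∀ ω e, Decidable (bad ω e)] {a b : ℕ}
    (h : ∀ e, #{ω | bad ω e} * a ≤ b * Fintype.card Ω) :
    ∃ ω, #{e | bad ω e} * a ≤ Fintype.card E * b := by
  have hsum : ∑ ω, #{e | bad ω e} * a ≤ ∑ _ω : Ω, Fintype.card E * b := by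
    calc ∑ ω, #{e | bad ω e} * a = ∑ e, #{ω | bad ω e} * a := by
          simp only [card_filter, sum_mul]; exact sum_comm
      _ ≤ ∑ _e : E, b * Fintype.card Ω := sum_le_sum fun e _ ↦ h e
      _ = ∑ _ω : Ω, Fintype.card E * b := by simp only [sum_const, card_univ, smul_eq_mul]; ring
  obtain ⟨ω, -, hω⟩ := exists_le_of_sum_le univ_nonempty hsum
  exact ⟨ω, hω⟩

theorem exists_embedding_forall_notMem {α : Type*} [Fintype α] {n : ℕ} (s : Finset α)
    (h : n + #s ≤ Fintype.card α) : ∃ g : Fin n ↪ α, ∀ i, g i ∉ s := by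
  classical
  obtain ⟨g⟩ := Function.Embedding.nonempty_of_card_le (α := Fin n) (β := {a // a ∉ s}) (by
    rw [Fintype.card_fin, Fintype.card_subtype_compl, Fintype.card_coe]; omega)
  exact ⟨g.trans (.subtype _), fun i ↦ (g i).2⟩

end Counting

section Packages

variable {κ F : Type*} [Field F] {t : ℕ}

def packageRows (p : κ → F × F) (r : Fˣ × F × F) (i : κ) : F :=
  r.1 * (p i).1 + r.2.1 + r.2.2 * (p i).2

theorem CoversWord.packageRows_affine {p : κ → F × F} {c : Fin t → κ} {w : Fin t → F}
    (h : CoversWord (packageRows p) c w) (a : Fˣ) (b : F) :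
    CoversWord (packageRows p) c fun i ↦ a * w i + b := by
  obtain ⟨⟨a', b', s⟩, hr⟩ := h
  refine ⟨⟨a * a', a * b' + b, a * s⟩, fun i ↦ ?_⟩
  simp only [← hr i, packageRows, Units.val_mul]
  ring

theorem coversWord_packageRows_affine_iff {p : κ → F × F} {c : Fin t → κ} {w : Fin t → F}
    (a : Fˣ) (b : F) :
    (CoversWord (packageRows p) c fun i ↦ a * w i + b) ↔ CoversWord (packageRows p) c w := by
  refine ⟨fun h ↦ ?_, fun h ↦ h.packageRows_affine a b⟩
  convert h.packageRows_affine a⁻¹ (-(↑a⁻¹ * b)) using 2 with i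
  simp only [mul_add, Units.inv_mul_cancel_left]
  ring

variable [Fintype F] [DecidableEq F]

def missingPackages (w : Fin t → F) : Finset (Fin t → F × F) :=
  {y | ¬CoversWord (packageRows y) id w}

theorem comp_mem_missingPackages_iff {p : κ → F × F} {c : Fin t → κ} {w : Fin t → F} :
    p ∘ c ∈ missingPackages w ↔ ¬CoversWord (packageRows p) c w := by
  simp only [missingPackages, mem_filter, mem_univ, true_and]
  rfl

theorem missingPackages_affine (a : Fˣ) (b : F) (w : Fin t → F) :
    missingPackages (fun i ↦ a * w i + b) = missingPackages w := by
  ext y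
  simp only [missingPackages, mem_filter, mem_univ, true_and, coversWord_packageRows_affine_iff]

variable [Fintype κ] [DecidableEq κ] {K : ℕ}

def uncoveredEvents (t : ℕ) (ω : Fin K → κ → F × F) : Finset ((Fin t → κ) × (Fin t → F)) :=
  {e | Injective e.1 ∧ (∀ a, e.2 ≠ const _ a) ∧ ∀ j, ¬CoversWord (packageRows (ω j)) e.1 e.2}

theorem exists_card_uncoveredEvents_mul_le {m B : ℕ}
    (hB : ∀ w : Fin t → F, (∀ a, w ≠ const _ a) → #(missingPackages w) ≤ B) :
    ∃ ω : Fin K → Fin m → F × F,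
      #(uncoveredEvents t ω) * (Fintype.card (F × F) ^ t) ^ K ≤
        m ^ t * Fintype.card F ^ t * B ^ K := by
  have hE : Fintype.card ((Fin t → Fin m) × (Fin t → F)) = m ^ t * Fintype.card F ^ t := by
    simp only [Fintype.card_prod, Fintype.card_fun, Fintype.card_fin]
  rw [← hE]
  suffices hevent : ∀ e : (Fin t → Fin m) × (Fin t → F),
      #{ω : Fin K → Fin m → F × F | e ∈ uncoveredEvents t ω} * (Fintype.card (F × F) ^ t) ^ K ≤
        B ^ K * Fintype.card (Fin K → Fin m → F × F) by
    obtain ⟨ω, hω⟩ := exists_card_filter_mul_le _ hevent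
    exact ⟨ω, by rwa [filter_univ_mem] at hω⟩
  rintro ⟨c, w⟩
  by_cases hcw : Injective c ∧ ∀ a, w ≠ const _ a
  · let S : Finset (Fin m → F × F) := {x | x ∘ c ∈ missingPackages w}
    have hS : #S * Fintype.card (F × F) ^ t ≤ B * Fintype.card (F × F) ^ m := by
      rw [card_filter_comp_mem_mul_pow hcw.1, Fintype.card_fin]
      exact Nat.mul_le_mul_right _ (hB w hcw.2)
    -- `(c, w)` is uncovered iff every package lies in `S`, independently of the others
    have hfilter : ({ω | (c, w) ∈ uncoveredEvents t ω} : Finset (Fin K → Fin m → F × F)) =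
        Fintype.piFinset fun _ ↦ S := by
      ext ω
      simp [uncoveredEvents, S, Fintype.mem_piFinset, comp_mem_missingPackages_iff, hcw]
    rw [hfilter, Fintype.card_piFinset_const, ← mul_pow, Fintype.card_fun, Fintype.card_fun,
      Fintype.card_fin, Fintype.card_fin, ← mul_pow]
    exact Nat.pow_le_pow_left hS K
  · rw [filter_false_of_mem fun ω _ h ↦ hcw (by simp_all [uncoveredEvents]), card_empty, zero_mul]
    exact Nat.zero_le _

theorem exists_isCoveringArray_of_card_missingPackages_le [NeZero t] {n B : ℕ}
    (hB : ∀ w : Fin t → F, (∀ a, w ≠ const _ a) → #(missingPackages w) ≤ B)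
    (h : (2 * n) ^ t * Fintype.card F ^ t * B ^ K ≤ n * (Fintype.card (F × F) ^ t) ^ K) :
    ∃ M : Fin K × Fˣ × F × F ⊕ F → Fin n → F, IsCoveringArray t M := by
  obtain ⟨ω, hω⟩ := exists_card_uncoveredEvents_mul_le (K := K) (m := 2 * n) hB
  have hcard : #(uncoveredEvents t ω) ≤ n :=
    Nat.le_of_mul_le_mul_right (hω.trans h) (pos_of_ne_zero (by simp))
  let D : Finset (Fin (2 * n)) := (uncoveredEvents t ω).image fun e ↦ e.1 0
  have hD : #D ≤ n := card_image_le.trans hcard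
  obtain ⟨g, hg⟩ := exists_embedding_forall_notMem (n := n) D (by rw [Fintype.card_fin]; omega)
  refine ⟨withConstRows fun r i ↦ packageRows (ω r.1) r.2 (g i),
    isCoveringArray_withConstRows fun c hc w hw ↦ ?_⟩
  have hgood : (g ∘ c, w) ∉ uncoveredEvents t ω := fun he ↦ hg (c 0) (mem_image_of_mem _ he)
  simp only [uncoveredEvents, mem_filter, mem_univ, true_and, not_and, not_forall,
    not_not] at hgood
  obtain ⟨j, r, hr⟩ := hgood (g.injective.comp hc) hw
  exact ⟨(j, r), hr⟩

end Packages

theorem card_missingPackages_le (w : Fin 3 → ZMod 3) (hw : ∀ a, w ≠ const _ a) :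
    #(missingPackages w) ≤ 333 := by
  have hrep : ∃ a : (ZMod 3)ˣ, ∃ b : ZMod 3,
      ∃ v ∈ ({![0, 0, 1], ![0, 1, 0], ![1, 0, 0], ![0, 1, 2]} : Finset (Fin 3 → ZMod 3)),
        w = fun i ↦ a * v i + b := by
    revert w; decide +kernel
  obtain ⟨a, b, v, hv, rfl⟩ := hrep
  rw [missingPackages_affine]
  clear hw
  revert v; decide +kernel

def packageCount (n : ℕ) : ℕ := 8 * ((2 * Nat.log 2 n + 18) / 9)

theorem mul_pow_packageCount_le (n : ℕ) :
    (2 * n) ^ 3 * 27 * 333 ^ packageCount n ≤ n * 729 ^ packageCount n := by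
  set J := (2 * Nat.log 2 n + 18) / 9
  have hn : n < 2 ^ (Nat.log 2 n + 1) := Nat.lt_pow_succ_log_self one_lt_two n
  have hsq : 216 * n ^ 2 ≤ 2 ^ (9 * J) := by
    calc 216 * n ^ 2 ≤ 2 ^ 8 * (2 ^ (Nat.log 2 n + 1)) ^ 2 := by gcongr; omega
      _ = 2 ^ (2 * Nat.log 2 n + 10) := by ring
      _ ≤ 2 ^ (9 * J) := Nat.pow_le_pow_right two_pos (by omega)
  calc (2 * n) ^ 3 * 27 * 333 ^ packageCount n = n * (216 * n ^ 2) * 333 ^ (8 * J) := by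
        rw [packageCount]; ring
    _ ≤ n * 2 ^ (9 * J) * 333 ^ (8 * J) := by gcongr
    _ = n * (2 ^ 9 * 333 ^ 8) ^ J := by rw [pow_mul, pow_mul, mul_assoc, ← mul_pow]
    _ ≤ n * (729 ^ 8) ^ J := by gcongr; norm_num
    _ = n * 729 ^ packageCount n := by rw [packageCount, pow_mul]

theorem eighteen_mul_packageCount_add_three_le (n : ℕ) : 18 * packageCount n + 3 ≤ 32 * Nat.log 2 n + 291 := by
  unfold packageCount; omega

theorem covering_array_3_3 :
    ∀ ε : ℝ, 0 < ε → ∃ N : ℕ, ∀ n : ℕ, N ≤ n →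
      ∃ k : ℕ, (k : ℝ) ≤ 32.03 * (1 + ε) * (Real.log n / Real.log 2) ∧
        ∃ M : Fin k → Fin n → Fin 3,
          ∀ c : Fin 3 → Fin n, Function.Injective c →
            ∀ w : Fin 3 → Fin 3, ∃ r : Fin k, ∀ i : Fin 3, M r (c i) = w i := by
  intro ε hε
  obtain ⟨N, hN⟩ : ∃ N, ∀ n, N ≤ n → 9700 ≤ Nat.log 2 n :=
    ⟨2 ^ 9700, fun _ ↦ Nat.le_log_of_pow_le one_lt_two⟩
  refine ⟨N, fun n hn ↦ ?_⟩
  obtain ⟨M, hM⟩ := exists_isCoveringArray_of_card_missingPackages_le (n := n)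
    card_missingPackages_le
    (by simpa [Fintype.card_prod, ZMod.card] using mul_pow_packageCount_le n)
  refine ⟨_, ?_, M ∘ (Fintype.equivFin _).symm, hM.comp_surjective (Equiv.surjective _)⟩
  have hrows : Fintype.card (Fin (packageCount n) × (ZMod 3)ˣ × ZMod 3 × ZMod 3 ⊕ ZMod 3) =
      18 * packageCount n + 3 := by
    simp only [Fintype.card_sum, Fintype.card_prod, Fintype.card_fin, Fintype.card_units,
      ZMod.card]
    ring
  have hlog : (9700 : ℝ) ≤ Nat.log 2 n := by exact_mod_cast hN n hn
  have hlogb : (Nat.log 2 n : ℝ) ≤ Real.log n / Real.log 2 := by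
    rw [Real.log_div_log]; exact_mod_cast Real.natLog_le_logb n 2
  rw [hrows]
  calc ((18 * packageCount n + 3 : ℕ) : ℝ) ≤ 32 * Nat.log 2 n + 291 := by
        exact_mod_cast eighteen_mul_packageCount_add_three_le n
    _ ≤ 32.03 * Nat.log 2 n := by linarith
    _ ≤ 32.03 * 1 * (Real.log n / Real.log 2) := by linarith
    _ ≤ 32.03 * (1 + ε) * (Real.log n / Real.log 2) := by gcongr; linarith
end

section
/- For every natural number m ≥ 1, the number of ordered triples (S₁, S₂, S₃) of subsets of Fin (3*m), each of cardinality m, satisfying S₁ ∩ S₂ ∩ S₃ = ∅, equals (3*m).choose m * (Finset.range (m+1)).sum (fun j => m.choose j * (2*m).choose (m−j) * (3*m−j).choose m). -/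
open Finset

lemma count_disjoint {n : ℕ} (m : ℕ) (T : Finset (Fin n)) :
    ((powersetCard m (univ : Finset (Fin n))).filter (fun S => T ∩ S = ∅)).card
      = (n - T.card).choose m := by
  have h1 : (powersetCard m (univ : Finset (Fin n))).filter (fun S => T ∩ S = ∅)
      = powersetCard m Tᶜ := by
    ext S
    simp only [mem_filter, mem_powersetCard, subset_univ, true_and,
      ← disjoint_iff_inter_eq_empty]
    constructor
    · rintro ⟨hc, hd⟩
      refine ⟨fun a haS => ?_, hc⟩
      simp only [mem_compl]
      exact fun haT => disjoint_left.1 hd haT haS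
    · rintro ⟨hsub, hc⟩
      exact ⟨hc, disjoint_left.2 fun a haT haS => absurd haT (by simpa using hsub haS)⟩
  rw [h1, card_powersetCard, card_compl, Fintype.card_fin]

lemma count_fiber {n : ℕ} (m j : ℕ) (hjm : j ≤ m) (S₁ : Finset (Fin n)) :
    ((powersetCard m (univ : Finset (Fin n))).filter (fun S₂ => (S₁ ∩ S₂).card = j)).card
      = S₁.card.choose j * (n - S₁.card).choose (m - j) := by
  have key : ((powersetCard m (univ : Finset (Fin n))).filter
        (fun S₂ => (S₁ ∩ S₂).card = j)).card
      = (powersetCard j S₁ ×ˢ powersetCard (m - j) S₁ᶜ).card := by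
    apply card_bij' (fun S₂ _ => (S₂ ∩ S₁, S₂ \ S₁)) (fun p _ => p.1 ∪ p.2)
    · intro a ha
      simp only [mem_filter, mem_powersetCard, subset_univ, true_and] at ha
      obtain ⟨hc, hj⟩ := ha
      simp only [mem_product, mem_powersetCard]
      refine ⟨⟨inter_subset_right, by rw [inter_comm]; exact hj⟩,
        ⟨fun x hx => ?_, ?_⟩⟩
      · simp only [mem_sdiff] at hx; simp [hx.2]
      · have := card_inter_add_card_sdiff a S₁
        rw [inter_comm] at hj
        omega
    · intro p hp
      simp only [mem_product, mem_powersetCard] at hp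
      obtain ⟨⟨hA, hAc⟩, hB, hBc⟩ := hp
      have hdisj : Disjoint p.1 p.2 := by
        refine disjoint_left.2 fun x hx1 hx2 => ?_
        have := hB hx2
        simp only [mem_compl] at this
        exact this (hA hx1)
      simp only [mem_filter, mem_powersetCard, subset_univ, true_and]
      constructor
      · rw [card_union_of_disjoint hdisj, hAc, hBc]; omega
      · have : S₁ ∩ (p.1 ∪ p.2) = p.1 := by
          ext x
          simp only [mem_inter, mem_union]
          constructor
          · rintro ⟨hxS, hx12⟩
            rcases hx12 with h | h
            · exact h
            · exact absurd hxS (by simpa using hB h)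
          · intro h
            exact ⟨hA h, Or.inl h⟩
        rw [this, hAc]
    · intro a ha
      have := sdiff_union_inter a S₁
      rw [union_comm] at this
      exact this
    · intro p hp
      simp only [mem_product, mem_powersetCard] at hp
      obtain ⟨⟨hA, hAc⟩, hB, hBc⟩ := hp
      have h1 : (p.1 ∪ p.2) ∩ S₁ = p.1 := by
        ext x
        simp only [mem_inter, mem_union]
        constructor
        · rintro ⟨h | h, hxS⟩
          · exact h
          · exact absurd hxS (by simpa using hB h)
        · intro h
          exact ⟨Or.inl h, hA h⟩
      have h2 : (p.1 ∪ p.2) \ S₁ = p.2 := by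
        ext x
        simp only [mem_sdiff, mem_union]
        constructor
        · rintro ⟨h | h, hxS⟩
          · exact absurd (hA h) hxS
          · exact h
        · intro h
          exact ⟨Or.inr h, by simpa using hB h⟩
      rw [h1, h2]
  rw [key, card_product, card_powersetCard, card_powersetCard, card_compl, Fintype.card_fin]

theorem count_triples_empty_intersection (m : ℕ) (hm : 1 ≤ m) :
    Fintype.card {S : Finset (Fin (3 * m)) × Finset (Fin (3 * m)) × Finset (Fin (3 * m)) //
        S.1.card = m ∧ S.2.1.card = m ∧ S.2.2.card = m ∧ S.1 ∩ S.2.1 ∩ S.2.2 = ∅} =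
      (3 * m).choose m *
        (Finset.range (m + 1)).sum
          (fun j => m.choose j * (2 * m).choose (m - j) * (3 * m - j).choose m) := by
  classical
  rw [Fintype.card_subtype]
  set A := powersetCard m (univ : Finset (Fin (3 * m))) with hA
  have h0 : (univ.filter fun S :
        Finset (Fin (3 * m)) × Finset (Fin (3 * m)) × Finset (Fin (3 * m)) =>
        S.1.card = m ∧ S.2.1.card = m ∧ S.2.2.card = m ∧ S.1 ∩ S.2.1 ∩ S.2.2 = ∅)
      = (A ×ˢ (A ×ˢ A)).filter (fun x => x.1 ∩ x.2.1 ∩ x.2.2 = ∅) := by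
    ext ⟨a, b, c⟩
    simp only [mem_filter, mem_univ, true_and, mem_product, hA, mem_powersetCard,
      subset_univ]
    tauto
  rw [h0, card_filter, sum_product]
  simp_rw [sum_product, ← card_filter]
  have step2 : ∀ S₁ ∈ A, ∀ S₂ ∈ A,
      (A.filter fun S₃ => S₁ ∩ S₂ ∩ S₃ = ∅).card = (3 * m - (S₁ ∩ S₂).card).choose m := by
    intro S₁ _ S₂ _
    exact count_disjoint m (S₁ ∩ S₂)
  have step3 : ∀ S₁ ∈ A,
      ∑ S₂ ∈ A, (3 * m - (S₁ ∩ S₂).card).choose m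
        = ∑ j ∈ range (m + 1), m.choose j * (2 * m).choose (m - j) * (3 * m - j).choose m := by
    intro S₁ hS₁
    have hS₁c : S₁.card = m := (mem_powersetCard.1 hS₁).2
    have hmaps : ∀ S₂ ∈ A, (S₁ ∩ S₂).card ∈ range (m + 1) := by
      intro S₂ _
      have h : (S₁ ∩ S₂).card ≤ S₁.card := card_le_card inter_subset_left
      rw [mem_range]
      omega
    rw [← sum_fiberwise_of_maps_to hmaps (fun S₂ => (3 * m - (S₁ ∩ S₂).card).choose m)]
    refine Finset.sum_congr rfl fun j hj => ?_
    rw [mem_range, Nat.lt_succ_iff] at hj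
    have : ∑ S₂ ∈ A.filter (fun S₂ => (S₁ ∩ S₂).card = j),
        (3 * m - (S₁ ∩ S₂).card).choose m
        = ∑ S₂ ∈ A.filter (fun S₂ => (S₁ ∩ S₂).card = j), (3 * m - j).choose m := by
      refine Finset.sum_congr rfl fun S₂ hS₂ => ?_
      rw [(mem_filter.1 hS₂).2]
    rw [this, sum_const, smul_eq_mul, count_fiber m j hj S₁, hS₁c]
    have h2m : 3 * m - m = 2 * m := by omega
    rw [h2m]
  calc ∑ S₁ ∈ A, ∑ S₂ ∈ A, (A.filter fun S₃ => S₁ ∩ S₂ ∩ S₃ = ∅).card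
      = ∑ S₁ ∈ A, ∑ S₂ ∈ A, (3 * m - (S₁ ∩ S₂).card).choose m := by
        refine Finset.sum_congr rfl fun S₁ h₁ => Finset.sum_congr rfl fun S₂ h₂ => ?_
        exact step2 S₁ h₁ S₂ h₂
    _ = ∑ S₁ ∈ A, ∑ j ∈ range (m + 1),
          m.choose j * (2 * m).choose (m - j) * (3 * m - j).choose m := by
        exact Finset.sum_congr rfl step3
    _ = (3 * m).choose m *
          ∑ j ∈ range (m + 1), m.choose j * (2 * m).choose (m - j) * (3 * m - j).choose m := by
        rw [sum_const, smul_eq_mul, hA, card_powersetCard, card_univ, Fintype.card_fin]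
end

section
/- For every natural number m ≥ 1, the number of ordered quadruples (S₁, S₂, S₃, S₄) of subsets of Fin (4*m), each of cardinality 2*m, satisfying S₁ ∩ S₂ ∩ S₃ ∩ S₄ = ∅, equals (4*m).choose (2*m) * (Finset.range (2*m+1)).sum (fun j => (2*m).choose j * (2*m).choose j * (Finset.range (j+1)).sum (fun i => j.choose i * (4*m−j).choose (2*m−i) * (4*m−i).choose (2*m))). -/
open Finset

lemma count_inter_card {α : Type*} [Fintype α] [DecidableEq α] (k i : ℕ) (hik : i ≤ k)
    (A : Finset α) :
    ((Finset.powersetCard k Finset.univ).filter (fun S => (S ∩ A).card = i)).card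
      = A.card.choose i * (Fintype.card α - A.card).choose (k - i) := by
  have h : ((Finset.powersetCard k Finset.univ).filter (fun S => (S ∩ A).card = i)).card
      = ((Finset.powersetCard i A) ×ˢ (Finset.powersetCard (k - i) Aᶜ)).card := by
    refine Finset.card_bij' (fun S _ => (S ∩ A, S \ A)) (fun P _ => P.1 ∪ P.2) ?_ ?_ ?_ ?_
    · intro S hS
      simp only [mem_filter, mem_powersetCard_univ] at hS
      obtain ⟨hk, hi⟩ := hS
      simp only [mem_product, mem_powersetCard]
      refine ⟨⟨inter_subset_right, hi⟩, ?_, ?_⟩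
      · intro x hx; simp only [mem_sdiff] at hx; simp [hx.2]
      · have := Finset.card_inter_add_card_sdiff S A
        omega
    · intro P hP
      simp only [mem_product, mem_powersetCard] at hP
      obtain ⟨⟨h1, h2⟩, h3, h4⟩ := hP
      have hd : Disjoint P.1 P.2 := by
        refine Finset.disjoint_left.mpr fun x hx1 hx2 => ?_
        have := h3 hx2
        simp only [mem_compl] at this
        exact this (h1 hx1)
      simp only [mem_filter, mem_powersetCard_univ]
      constructor
      · rw [Finset.card_union_of_disjoint hd, h2, h4]; omega
      · have : (P.1 ∪ P.2) ∩ A = P.1 := by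
          ext x
          simp only [mem_inter, mem_union]
          constructor
          · rintro ⟨hx | hx, hA⟩
            · exact hx
            · exact absurd hA (by simpa using h3 hx)
          · intro hx; exact ⟨Or.inl hx, h1 hx⟩
        rw [this, h2]
    · intro S hS
      simp only
      ext x
      simp only [mem_union, mem_inter, mem_sdiff]
      tauto
    · intro P hP
      simp only [mem_product, mem_powersetCard] at hP
      obtain ⟨⟨h1, h2⟩, h3, h4⟩ := hP
      have e1 : (P.1 ∪ P.2) ∩ A = P.1 := by
        ext x
        simp only [mem_inter, mem_union]
        constructor
        · rintro ⟨hx | hx, hA⟩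
          · exact hx
          · exact absurd hA (by simpa using h3 hx)
        · intro hx; exact ⟨Or.inl hx, h1 hx⟩
      have e2 : (P.1 ∪ P.2) \ A = P.2 := by
        ext x
        simp only [mem_sdiff, mem_union]
        constructor
        · rintro ⟨hx | hx, hA⟩
          · exact absurd (h1 hx) hA
          · exact hx
        · intro hx
          have := h3 hx
          simp only [mem_compl] at this
          exact ⟨Or.inr hx, this⟩
      simp [e1, e2]
  rw [h, Finset.card_product, Finset.card_powersetCard, Finset.card_powersetCard,
    Finset.card_compl]

lemma count_disjoint_s6 {α : Type*} [Fintype α] [DecidableEq α] (k : ℕ) (T : Finset α) :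
    ((Finset.powersetCard k Finset.univ).filter (fun S => T ∩ S = ∅)).card
      = (Fintype.card α - T.card).choose k := by
  have h : (Finset.powersetCard k Finset.univ).filter (fun S => T ∩ S = ∅)
      = Finset.powersetCard k Tᶜ := by
    ext S
    simp only [mem_filter, mem_powersetCard_univ, mem_powersetCard]
    constructor
    · rintro ⟨⟨-, hk⟩, he⟩
      refine ⟨fun x hx => ?_, hk⟩
      simp only [mem_compl]
      intro hT
      have : x ∈ T ∩ S := mem_inter.mpr ⟨hT, hx⟩
      simp [he] at this
    · rintro ⟨hsub, hk⟩
      refine ⟨⟨Finset.subset_univ S, hk⟩, ?_⟩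
      ext x
      simp only [mem_inter, notMem_empty, iff_false, not_and]
      intro hT hS
      exact absurd hT (by simpa using hsub hS)
  rw [h, Finset.card_powersetCard, Finset.card_compl]

lemma sum_group_card {β : Type*} (s : Finset β) (h : β → ℕ) (t : Finset ℕ)
    (hmaps : ∀ x ∈ s, h x ∈ t) (g : ℕ → ℕ) :
    ∑ x ∈ s, g (h x) = ∑ i ∈ t, (s.filter (fun x => h x = i)).card * g i := by
  rw [← Finset.sum_fiberwise_of_maps_to hmaps (fun x => g (h x))]
  refine Finset.sum_congr rfl fun i _ => ?_
  rw [Finset.sum_congr rfl (fun x hx => by rw [(Finset.mem_filter.mp hx).2]),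
    Finset.sum_const, smul_eq_mul]

theorem count_quadruples_empty_intersection (m : ℕ) (hm : 1 ≤ m) :
    Fintype.card {S : Finset (Fin (4 * m)) × Finset (Fin (4 * m)) × Finset (Fin (4 * m)) ×
        Finset (Fin (4 * m)) //
        S.1.card = 2 * m ∧ S.2.1.card = 2 * m ∧ S.2.2.1.card = 2 * m ∧ S.2.2.2.card = 2 * m ∧
          S.1 ∩ S.2.1 ∩ S.2.2.1 ∩ S.2.2.2 = ∅} =
      (4 * m).choose (2 * m) *
        (Finset.range (2 * m + 1)).sum
          (fun j => (2 * m).choose j * (2 * m).choose j *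
            (Finset.range (j + 1)).sum
              (fun i => j.choose i * (4 * m - j).choose (2 * m - i) *
                (4 * m - i).choose (2 * m))) := by
  classical
  set A : Finset (Finset (Fin (4 * m))) := Finset.powersetCard (2 * m) Finset.univ with hA
  have hcard : Fintype.card (Fin (4 * m)) = 4 * m := Fintype.card_fin _
  have hAf : ∀ f : Finset (Fin (4 * m)) → ℕ,
      (∑ S : Finset (Fin (4 * m)), if S.card = 2 * m then f S else 0) = ∑ S ∈ A, f S := by
    intro f
    rw [← Finset.sum_filter]
    refine Finset.sum_congr ?_ fun _ _ => rfl
    ext S; simp [hA, Finset.mem_powersetCard_univ]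
  -- Step 1: express the cardinality as an iterated sum
  have step1 : Fintype.card {S : Finset (Fin (4 * m)) × Finset (Fin (4 * m)) ×
        Finset (Fin (4 * m)) × Finset (Fin (4 * m)) //
        S.1.card = 2 * m ∧ S.2.1.card = 2 * m ∧ S.2.2.1.card = 2 * m ∧ S.2.2.2.card = 2 * m ∧
          S.1 ∩ S.2.1 ∩ S.2.2.1 ∩ S.2.2.2 = ∅} =
      ∑ S₁ ∈ A, ∑ S₂ ∈ A, ∑ S₃ ∈ A, ∑ S₄ ∈ A,
        if S₁ ∩ S₂ ∩ S₃ ∩ S₄ = ∅ then 1 else 0 := by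
    rw [Fintype.card_subtype, Finset.card_filter]
    rw [Fintype.sum_prod_type]
    simp only [Fintype.sum_prod_type]
    simp only [ite_and]
    simp only [Finset.sum_ite_irrel, Finset.sum_const_zero]
    simp_rw [hAf]
  rw [step1]
  -- Step 2: innermost sum over S₄
  have step4 : ∀ T : Finset (Fin (4 * m)),
      (∑ S₄ ∈ A, if T ∩ S₄ = ∅ then 1 else 0) = (4 * m - T.card).choose (2 * m) := by
    intro T
    rw [← Finset.card_filter]
    have := count_disjoint_s6 (α := Fin (4 * m)) (2 * m) T
    rwa [hcard] at this
  -- Step 3: sum over S₃, for P of card ≤ 2m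
  have step3 : ∀ P : Finset (Fin (4 * m)), P.card ≤ 2 * m →
      (∑ S₃ ∈ A, (4 * m - (P ∩ S₃).card).choose (2 * m)) =
        ∑ i ∈ Finset.range (P.card + 1),
          P.card.choose i * (4 * m - P.card).choose (2 * m - i) * (4 * m - i).choose (2 * m) := by
    intro P hP
    have h1 : (∑ S₃ ∈ A, (4 * m - (P ∩ S₃).card).choose (2 * m)) =
        ∑ S₃ ∈ A, (fun i => (4 * m - i).choose (2 * m)) ((S₃ ∩ P).card) := by
      refine Finset.sum_congr rfl fun S₃ _ => by rw [Finset.inter_comm]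
    rw [h1, sum_group_card A (fun S₃ => (S₃ ∩ P).card) (Finset.range (P.card + 1))
      (fun S₃ _ => Finset.mem_range.mpr
        (Nat.lt_succ_of_le (Finset.card_le_card Finset.inter_subset_right)))
      (fun i => (4 * m - i).choose (2 * m))]
    refine Finset.sum_congr rfl fun i hi => ?_
    have hik : i ≤ 2 * m := le_trans (Nat.lt_succ_iff.mp (Finset.mem_range.mp hi)) hP
    rw [hA, count_inter_card _ _ hik, hcard, mul_assoc]
  -- Step 2': sum over S₂ for fixed S₁ of card 2m
  have step2 : ∀ S₁ : Finset (Fin (4 * m)), S₁.card = 2 * m →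
      (∑ S₂ ∈ A, ∑ S₃ ∈ A, ∑ S₄ ∈ A, if S₁ ∩ S₂ ∩ S₃ ∩ S₄ = ∅ then 1 else 0) =
      ∑ j ∈ Finset.range (2 * m + 1), (2 * m).choose j * (2 * m).choose j *
        ∑ i ∈ Finset.range (j + 1),
          j.choose i * (4 * m - j).choose (2 * m - i) * (4 * m - i).choose (2 * m) := by
    intro S₁ hS₁
    have h1 : (∑ S₂ ∈ A, ∑ S₃ ∈ A, ∑ S₄ ∈ A, if S₁ ∩ S₂ ∩ S₃ ∩ S₄ = ∅ then 1 else 0) =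
        ∑ S₂ ∈ A, (fun j => ∑ i ∈ Finset.range (j + 1),
          j.choose i * (4 * m - j).choose (2 * m - i) * (4 * m - i).choose (2 * m))
            ((S₂ ∩ S₁).card) := by
      refine Finset.sum_congr rfl fun S₂ _ => ?_
      have e1 : ∀ S₃ ∈ A, (∑ S₄ ∈ A, if S₁ ∩ S₂ ∩ S₃ ∩ S₄ = ∅ then 1 else 0)
          = (4 * m - ((S₁ ∩ S₂) ∩ S₃).card).choose (2 * m) := fun S₃ _ => step4 _
      rw [Finset.sum_congr rfl e1]
      have hPc : (S₁ ∩ S₂).card ≤ 2 * m := by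
        calc (S₁ ∩ S₂).card ≤ S₁.card := Finset.card_le_card Finset.inter_subset_left
        _ = 2 * m := hS₁
      rw [step3 (S₁ ∩ S₂) hPc]
      rw [Finset.inter_comm S₂ S₁]
    rw [h1, sum_group_card A (fun S₂ => (S₂ ∩ S₁).card) (Finset.range (2 * m + 1))
      (fun S₂ hS₂ => Finset.mem_range.mpr (Nat.lt_succ_of_le (by
        calc (S₂ ∩ S₁).card ≤ S₁.card := Finset.card_le_card Finset.inter_subset_right
        _ = 2 * m := hS₁)))
      (fun j => ∑ i ∈ Finset.range (j + 1),
        j.choose i * (4 * m - j).choose (2 * m - i) * (4 * m - i).choose (2 * m))]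
    refine Finset.sum_congr rfl fun j hj => ?_
    have hj' : j ≤ 2 * m := Nat.lt_succ_iff.mp (Finset.mem_range.mp hj)
    rw [hA, count_inter_card _ _ hj', hcard, hS₁]
    have h42 : 4 * m - 2 * m = 2 * m := by omega
    rw [h42, Nat.choose_symm hj']
  -- Combine
  have houter : ∀ S₁ ∈ A, (∑ S₂ ∈ A, ∑ S₃ ∈ A, ∑ S₄ ∈ A,
      if S₁ ∩ S₂ ∩ S₃ ∩ S₄ = ∅ then 1 else 0) =
      ∑ j ∈ Finset.range (2 * m + 1), (2 * m).choose j * (2 * m).choose j *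
        ∑ i ∈ Finset.range (j + 1),
          j.choose i * (4 * m - j).choose (2 * m - i) * (4 * m - i).choose (2 * m) := by
    intro S₁ hS₁
    exact step2 S₁ (Finset.mem_powersetCard_univ.mp hS₁)
  rw [Finset.sum_congr rfl houter, Finset.sum_const, smul_eq_mul, hA,
    Finset.card_powersetCard, Finset.card_univ, hcard]
end

section
/- There exists N such that for all natural numbers m ≥ N and all j with 0 ≤ j ≤ m, one has (m.choose j) * ((2*m).choose (m−j)) * ((3*m−j).choose m) ≤ (40.02 : ℝ)^m. -/
lemma choose_mul_pow_le' (n k : ℕ) (t : ℝ) (ht : 0 ≤ t) :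
    (n.choose k : ℝ) * t ^ k ≤ (1 + t) ^ n := by
  rcases le_or_gt k n with h | h
  · have hexp : (t + 1) ^ n = ∑ i ∈ Finset.range (n + 1), t ^ i * 1 ^ (n - i) * (n.choose i : ℝ) :=
      add_pow t 1 n
    have hmem : k ∈ Finset.range (n + 1) := Finset.mem_range.mpr (Nat.lt_succ_of_le h)
    have hle : t ^ k * 1 ^ (n - k) * (n.choose k : ℝ) ≤
        ∑ i ∈ Finset.range (n + 1), t ^ i * 1 ^ (n - i) * (n.choose i : ℝ) := by
      apply Finset.single_le_sum (f := fun i => t ^ i * 1 ^ (n - i) * (n.choose i : ℝ)) _ hmem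
      intro i _
      positivity
    calc (n.choose k : ℝ) * t ^ k = t ^ k * 1 ^ (n - k) * (n.choose k : ℝ) := by ring
      _ ≤ (t + 1) ^ n := by rw [hexp]; exact hle
      _ = (1 + t) ^ n := by ring
  · rw [Nat.choose_eq_zero_of_lt h]
    simp only [Nat.cast_zero, zero_mul]
    positivity

theorem summand_bound_q3 :
    ∃ N : ℕ, ∀ m : ℕ, N ≤ m → ∀ j : ℕ, j ≤ m →
      ((m.choose j) * ((2 * m).choose (m - j)) * ((3 * m - j).choose m) : ℝ) ≤
        (40.02 : ℝ) ^ m := by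
  refine ⟨0, fun m _ j hj => ?_⟩
  set a : ℝ := 15 / 41 with ha
  set b : ℝ := 15 / 26 with hb
  set c : ℝ := 15 / 26 with hc
  have h1 := choose_mul_pow_le' m j a (by norm_num [ha])
  have h2 := choose_mul_pow_le' (2 * m) (m - j) b (by norm_num [hb])
  have h3 := choose_mul_pow_le' (3 * m - j) m c (by norm_num [hc])
  set f : ℝ := ((m.choose j) * ((2 * m).choose (m - j)) * ((3 * m - j).choose m) : ℝ) with hf
  have hfnn : 0 ≤ f := by positivity
  have hj3 : j ≤ 3 * m := le_trans hj (by omega)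
  -- product of the three bounds
  have hmul : f * (a ^ j * b ^ (m - j) * c ^ m) ≤
      (1 + a) ^ m * (1 + b) ^ (2 * m) * (1 + c) ^ (3 * m - j) := by
    have e : f * (a ^ j * b ^ (m - j) * c ^ m) =
        ((m.choose j : ℝ) * a ^ j) * (((2 * m).choose (m - j) : ℝ) * b ^ (m - j)) *
          (((3 * m - j).choose m : ℝ) * c ^ m) := by ring
    rw [e]
    have p1 : (0 : ℝ) ≤ (m.choose j : ℝ) * a ^ j := by positivity
    have p2 : (0 : ℝ) ≤ ((2 * m).choose (m - j) : ℝ) * b ^ (m - j) := by positivity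
    have q1 : (0 : ℝ) ≤ (1 + a) ^ m := by positivity
    have q2 : (0 : ℝ) ≤ (1 + b) ^ (2 * m) := by positivity
    exact mul_le_mul (mul_le_mul h1 h2 p2 q1) h3 (by positivity) (by positivity)
  -- multiply both sides by (1+c)^j to cancel j-dependence
  have key : f * (b * c) ^ m ≤ ((1 + a) * (1 + b) ^ 2 * (1 + c) ^ 3) ^ m := by
    have hcj : (0 : ℝ) ≤ (1 + c) ^ j := by positivity
    have step := mul_le_mul_of_nonneg_right hmul hcj
    have lhs_eq : f * (a ^ j * b ^ (m - j) * c ^ m) * (1 + c) ^ j = f * (b * c) ^ m := by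
      have hac : a * (1 + c) = b := by rw [ha, hb, hc]; norm_num
      have : a ^ j * (1 + c) ^ j = b ^ j := by rw [← mul_pow, hac]
      calc f * (a ^ j * b ^ (m - j) * c ^ m) * (1 + c) ^ j
          = f * ((a ^ j * (1 + c) ^ j) * b ^ (m - j) * c ^ m) := by ring
        _ = f * (b ^ j * b ^ (m - j) * c ^ m) := by rw [this]
        _ = f * (b ^ (j + (m - j)) * c ^ m) := by rw [pow_add]
        _ = f * (b ^ m * c ^ m) := by rw [Nat.add_sub_cancel' hj]
        _ = f * (b * c) ^ m := by rw [mul_pow]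
    have rhs_eq : (1 + a) ^ m * (1 + b) ^ (2 * m) * (1 + c) ^ (3 * m - j) * (1 + c) ^ j =
        ((1 + a) * (1 + b) ^ 2 * (1 + c) ^ 3) ^ m := by
      calc (1 + a) ^ m * (1 + b) ^ (2 * m) * (1 + c) ^ (3 * m - j) * (1 + c) ^ j
          = (1 + a) ^ m * (1 + b) ^ (2 * m) * ((1 + c) ^ (3 * m - j) * (1 + c) ^ j) := by ring
        _ = (1 + a) ^ m * (1 + b) ^ (2 * m) * (1 + c) ^ (3 * m) := by
            rw [← pow_add, Nat.sub_add_cancel hj3]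
        _ = ((1 + a) * (1 + b) ^ 2 * (1 + c) ^ 3) ^ m := by
            rw [mul_pow, mul_pow, ← pow_mul, ← pow_mul, Nat.mul_comm 2 m, Nat.mul_comm 3 m]
    rw [lhs_eq, rhs_eq] at step
    exact step
  -- divide by (b*c)^m
  have hbc : (0 : ℝ) < b * c := by rw [hb, hc]; norm_num
  have hbcm : (0 : ℝ) < (b * c) ^ m := pow_pos hbc m
  have hdiv : f ≤ (((1 + a) * (1 + b) ^ 2 * (1 + c) ^ 3) / (b * c)) ^ m := by
    rw [div_pow, le_div_iff₀ hbcm]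
    exact key
  refine hdiv.trans (pow_le_pow_left₀ (by positivity) ?_ m)
  rw [ha, hb, hc]
  norm_num
end

section
/- There exists N such that for all natural numbers m ≥ N, (Finset.range (m+1)).sum (fun j => (m.choose j) * ((2*m).choose (m−j)) * ((3*m−j).choose m)) ≤ (0.88 : ℝ)^m * ((3*m).choose m)^2. -/
/-
Put i = m - j. The j-th summand is `chooseProd i j`, a product of three binomial coefficients,
and the saddle-point estimate `C(n, k) xᵏ (1 - x)ⁿ⁻ᵏ ≤ 1` for each of them bounds it by
`40.09 ^ (i + j) = 40.09 ^ m`, provided the weights x, y, z are tuned to the ratio j / i; one choice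
covers j ≤ i and another j ≥ i. Hence the sum is at most `(m + 1) * 40.09 ^ m`. On the other side
`C(3m, m) * 4 ^ m` is the largest term of `(1 + 2) ^ (3m)`, so `C(3m, m) ≥ (27 / 4) ^ m / (3m + 1)`,
and `0.88 * (27 / 4) ^ 2 = 40.095 > 40.09` leaves an exponential margin that absorbs the
polynomial factors.
-/

open Filter Finset

theorem choose_mul_pow_mul_pow_le_add_pow {R : Type*} [CommSemiring R] [PartialOrder R]
    [IsOrderedRing R] {x y : R} (hx : 0 ≤ x) (hy : 0 ≤ y) (n k : ℕ) :
    n.choose k * x ^ k * y ^ (n - k) ≤ (x + y) ^ n := by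
  rcases le_or_gt k n with hk | hk
  · rw [add_pow]
    refine single_le_sum (f := fun i => x ^ i * y ^ (n - i) * n.choose i)
      (fun i _ => by positivity) (mem_range.2 (Nat.lt_succ_of_le hk)) |>.trans_eq' ?_
    ring
  · simp [Nat.choose_eq_zero_of_lt hk, add_nonneg hx hy]

theorem choose_mul_pow_mul_one_sub_pow_le_one {x : ℝ} (hx₀ : 0 ≤ x) (hx₁ : x ≤ 1) (n k : ℕ) :
    n.choose k * x ^ k * (1 - x) ^ (n - k) ≤ 1 := by
  simpa using choose_mul_pow_mul_pow_le_add_pow hx₀ (sub_nonneg.2 hx₁) n k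

theorem one_le_pow_mul_pow_of_le {U V : ℝ} (hU : 1 ≤ U) (hUV : 1 ≤ U * V) {i j : ℕ}
    (hji : j ≤ i) : 1 ≤ U ^ i * V ^ j := by
  obtain ⟨k, rfl⟩ := Nat.exists_eq_add_of_le hji
  rw [add_comm, pow_add, mul_assoc, ← mul_pow]
  exact one_le_mul_of_one_le_of_one_le (one_le_pow₀ hU) (one_le_pow₀ hUV)

/-- With `m = i + j`, this counts the pairs `(B, C)` of `m`-subsets of a `3m`-set with
`|A ∩ B| = j` and `A ∩ B ∩ C = ∅`, for a fixed `m`-subset `A`. -/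
def chooseProd (i j : ℕ) : ℕ :=
  (i + j).choose j * (2 * (i + j)).choose i * (3 * i + 2 * j).choose (i + j)

theorem chooseProd_mul_pow_mul_pow_le_one {x y z : ℝ} (hx₀ : 0 ≤ x) (hx₁ : x ≤ 1) (hy₀ : 0 ≤ y)
    (hy₁ : y ≤ 1) (hz₀ : 0 ≤ z) (hz₁ : z ≤ 1) (i j : ℕ) :
    chooseProd i j * (((1 - x) * y * (1 - y) * z * (1 - z) ^ 2) ^ i *
      (x * (1 - y) ^ 2 * z * (1 - z)) ^ j) ≤ 1 := by
  have hx := choose_mul_pow_mul_one_sub_pow_le_one hx₀ hx₁ (i + j) j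
  have hy := choose_mul_pow_mul_one_sub_pow_le_one hy₀ hy₁ (2 * (i + j)) i
  have hz := choose_mul_pow_mul_one_sub_pow_le_one hz₀ hz₁ (3 * i + 2 * j) (i + j)
  rw [show i + j - j = i by omega] at hx
  rw [show 2 * (i + j) - i = i + 2 * j by omega] at hy
  rw [show 3 * i + 2 * j - (i + j) = 2 * i + j by omega] at hz
  calc _ = ((i + j).choose j * x ^ j * (1 - x) ^ i) *
        ((2 * (i + j)).choose i * y ^ i * (1 - y) ^ (i + 2 * j)) *
        ((3 * i + 2 * j).choose (i + j) * z ^ (i + j) * (1 - z) ^ (2 * i + j)) := by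
        simp only [chooseProd]; push_cast
        generalize 1 - x = x'; generalize 1 - y = y'; generalize 1 - z = z'; ring
    _ ≤ 1 := mul_le_one₀ (mul_le_one₀ hx (by positivity) hy) (by positivity) hz

theorem chooseProd_le_pow_of_one_le {x y z c : ℝ} (hx₀ : 0 ≤ x) (hx₁ : x ≤ 1) (hy₀ : 0 ≤ y)
    (hy₁ : y ≤ 1) (hz₀ : 0 ≤ z) (hz₁ : z ≤ 1) (hc : 0 ≤ c) {i j : ℕ}
    (h : 1 ≤ (c * ((1 - x) * y * (1 - y) * z * (1 - z) ^ 2)) ^ i *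
      (c * (x * (1 - y) ^ 2 * z * (1 - z))) ^ j) :
    (chooseProd i j : ℝ) ≤ c ^ (i + j) := by
  set W := ((1 - x) * y * (1 - y) * z * (1 - z) ^ 2) ^ i * (x * (1 - y) ^ 2 * z * (1 - z)) ^ j
  have hW : 1 ≤ c ^ (i + j) * W := by
    simpa only [W, mul_pow, pow_add, mul_mul_mul_comm] using h
  calc (chooseProd i j : ℝ) ≤ chooseProd i j * (c ^ (i + j) * W) :=
        le_mul_of_one_le_right (by positivity) hW
    _ = c ^ (i + j) * (chooseProd i j * W) := by ring
    _ ≤ c ^ (i + j) := mul_le_of_le_one_right (by positivity)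
          (chooseProd_mul_pow_mul_pow_le_one hx₀ hx₁ hy₀ hy₁ hz₀ hz₁ i j)

-- The rate of `chooseProd` peaks at ≈ 40.0148 where `j / (i + j) ≈ 0.268`, with saddle point
-- `(x, y, z) ≈ (0.27, 0.37, 0.37)`; for `j ≥ i` there is ample room.
theorem chooseProd_le_pow (i j : ℕ) : (chooseProd i j : ℝ) ≤ (4009 / 100) ^ (i + j) := by
  rcases le_total j i with h | h
  · exact chooseProd_le_pow_of_one_le (x := 27 / 100) (y := 37 / 100) (z := 37 / 100)
      (by norm_num) (by norm_num) (by norm_num) (by norm_num) (by norm_num) (by norm_num)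
      (by norm_num) (one_le_pow_mul_pow_of_le (by norm_num) (by norm_num) h)
  · refine chooseProd_le_pow_of_one_le (x := 1 / 2) (y := 1 / 4) (z := 2 / 5)
      (by norm_num) (by norm_num) (by norm_num) (by norm_num) (by norm_num) (by norm_num)
      (by norm_num) ?_
    rw [mul_comm]
    exact one_le_pow_mul_pow_of_le (by norm_num) (by norm_num) h

theorem choose_succ_mul_pow_mul (n i p : ℕ) :
    n.choose (i + 1) * p ^ (n - (i + 1)) * (p * (i + 1)) = n.choose i * p ^ (n - i) * (n - i) := by
  rcases lt_or_ge i n with hi | hi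
  · have h := Nat.choose_succ_right_eq n i
    rw [show n - i = n - (i + 1) + 1 by omega] at h ⊢
    calc _ = p ^ (n - (i + 1)) * p * (n.choose (i + 1) * (i + 1)) := by ring
      _ = _ := by rw [h, pow_succ]; ring
  · simp [Nat.choose_eq_zero_of_lt (Nat.lt_succ_of_le hi), Nat.sub_eq_zero_of_le hi]

theorem choose_mul_two_pow_le (m i : ℕ) :
    (3 * m).choose i * 2 ^ (3 * m - i) ≤ (3 * m).choose m * 2 ^ (2 * m) := by
  set f : ℕ → ℕ := fun i => (3 * m).choose i * 2 ^ (3 * m - i)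
  have hstep (i : ℕ) : f (i + 1) * (2 * (i + 1)) = f i * (3 * m - i) :=
    choose_succ_mul_pow_mul (3 * m) i 2
  have hf : f m = (3 * m).choose m * 2 ^ (2 * m) := by simp only [f]; congr 2; omega
  change f i ≤ _
  rw [← hf]
  rcases le_total i m with him | hmi
  · refine monotoneOn_of_le_add_one (f := f) Set.ordConnected_Iic (fun k _ _ hk => ?_)
      (Set.mem_Iic.2 him) (Set.mem_Iic.2 le_rfl) him
    refine Nat.le_of_mul_le_mul_right ?_ (by omega : 0 < 2 * (k + 1))
    rw [hstep]
    exact Nat.mul_le_mul_left _ (by simp only [Set.mem_Iic] at hk; omega)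
  · refine antitoneOn_of_add_one_le (f := f) Set.ordConnected_Ici (fun k _ hk _ => ?_)
      (Set.mem_Ici.2 le_rfl) (Set.mem_Ici.2 hmi) hmi
    refine Nat.le_of_mul_le_mul_right ?_ (by omega : 0 < 2 * (k + 1))
    rw [hstep]
    exact Nat.mul_le_mul_left _ (by simp only [Set.mem_Ici] at hk; omega)

theorem twentySeven_pow_le_mul_choose_mul_four_pow (m : ℕ) :
    27 ^ m ≤ (3 * m + 1) * (3 * m).choose m * 4 ^ m := by
  calc 27 ^ m = (1 + 2) ^ (3 * m) := by rw [pow_mul]; norm_num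
    _ = ∑ i ∈ range (3 * m + 1), (3 * m).choose i * 2 ^ (3 * m - i) := by
      rw [add_pow]; simp only [one_pow, one_mul, Nat.cast_id, mul_comm]
    _ ≤ ∑ _i ∈ range (3 * m + 1), (3 * m).choose m * 2 ^ (2 * m) :=
      sum_le_sum fun i _ => choose_mul_two_pow_le m i
    _ = (3 * m + 1) * (3 * m).choose m * 4 ^ m := by
      rw [sum_const, card_range, smul_eq_mul, pow_mul]; ring

theorem eventually_cubic_le_pow {r : ℝ} (hr : 1 < r) :
    ∀ᶠ m : ℕ in atTop, ((m : ℝ) + 1) * (3 * m + 1) ^ 2 ≤ r ^ m := by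
  filter_upwards [(isLittleO_pow_const_const_pow_of_one_lt (R := ℝ) 3 hr).bound
    (by norm_num : (0 : ℝ) < 1 / 32), eventually_ge_atTop 1] with m hm hm₁
  have hm₁ : (1 : ℝ) ≤ m := by exact_mod_cast hm₁
  rw [Real.norm_of_nonneg (by positivity), Real.norm_of_nonneg (by positivity)] at hm
  calc ((m : ℝ) + 1) * (3 * m + 1) ^ 2 ≤ (2 * m) * (4 * m) ^ 2 := by
        gcongr <;> linarith
    _ = 32 * (m : ℝ) ^ 3 := by ring
    _ ≤ r ^ m := by linarith

theorem sum_choose_mul_le_pow (m : ℕ) :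
    (((range (m + 1)).sum
        (fun j => (m.choose j) * ((2 * m).choose (m - j)) * ((3 * m - j).choose m)) : ℕ) : ℝ) ≤
      (m + 1) * (4009 / 100) ^ m := by
  have hterm (j : ℕ) (hj : j ∈ range (m + 1)) :
      m.choose j * (2 * m).choose (m - j) * (3 * m - j).choose m = chooseProd (m - j) j := by
    have hjm : j ≤ m := Nat.lt_succ_iff.1 (mem_range.1 hj)
    simp only [chooseProd, show m - j + j = m by omega,
      show 3 * (m - j) + 2 * j = 3 * m - j by omega]
  rw [sum_congr rfl hterm, Nat.cast_sum]
  calc _ ≤ ∑ _j ∈ range (m + 1), (4009 / 100 : ℝ) ^ m :=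
        sum_le_sum fun j hj => (chooseProd_le_pow _ _).trans_eq
          (by rw [Nat.sub_add_cancel (Nat.lt_succ_iff.1 (mem_range.1 hj))])
    _ = _ := by rw [sum_const, card_range, nsmul_eq_mul]; push_cast; ring

theorem prob_bound_q3 :
    ∃ N : ℕ, ∀ m : ℕ, N ≤ m →
      (((Finset.range (m + 1)).sum
          (fun j => (m.choose j) * ((2 * m).choose (m - j)) * ((3 * m - j).choose m)) : ℕ) : ℝ) ≤
        (0.88 : ℝ) ^ m * (((3 * m).choose m : ℝ)) ^ 2 := by
  -- `8019 / 8018 * 40.09 * 16 = 0.88 * 27 ^ 2`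
  obtain ⟨N, hN⟩ :=
    eventually_atTop.1 (eventually_cubic_le_pow (by norm_num : (1 : ℝ) < 8019 / 8018))
  refine ⟨N, fun m hm => (sum_choose_mul_le_pow m).trans ?_⟩
  have hC : (27 : ℝ) ^ m ≤ (3 * m + 1) * ((3 * m).choose m : ℝ) * 4 ^ m := by
    exact_mod_cast twentySeven_pow_le_mul_choose_mul_four_pow m
  set C : ℝ := ((3 * m).choose m : ℝ)
  have hpos : (0 : ℝ) < (3 * m + 1) ^ 2 * 16 ^ m := by positivity
  refine le_of_mul_le_mul_right ?_ hpos
  calc ((m : ℝ) + 1) * (4009 / 100) ^ m * ((3 * m + 1) ^ 2 * 16 ^ m)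
      = ((m + 1) * (3 * m + 1) ^ 2) * (4009 / 100 * 16) ^ m := by
        rw [mul_pow]; ring
    _ ≤ (8019 / 8018) ^ m * (4009 / 100 * 16) ^ m := by gcongr; exact hN m hm
    _ = (0.88 : ℝ) ^ m * 27 ^ m * 27 ^ m := by
      rw [← mul_pow, ← mul_pow, ← mul_pow]; norm_num
    _ ≤ (0.88 : ℝ) ^ m * ((3 * m + 1) * C * 4 ^ m) * ((3 * m + 1) * C * 4 ^ m) := by gcongr
    _ = (0.88 : ℝ) ^ m * C ^ 2 * ((3 * m + 1) ^ 2 * 16 ^ m) := by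
      rw [show (16 : ℝ) = 4 * 4 by norm_num, mul_pow]; ring
end

section
/- There exists N such that for all natural numbers m ≥ N, (Finset.range (m+1)).sum (fun j => (m.choose j) * ((3*m).choose (m−j)) * ((4*m−j).choose m)) ≤ (0.94 : ℝ)^m * ((4*m).choose m)^2. -/
/-!
Each term is bounded separately. Removing `j` elements from a `4m`-set shrinks `C(·, m)` by a
factor `≤ 3/4` each time, so `C(4m-j, m) ≤ (3/4)^j C(4m, m)`; and for every `y > 0`, comparing
with single terms of binomial expansions gives
`C(m, j) C(3m, m-j) (3/4)^j y^m ≤ (1 + 3y/4)^m (1 + y)^(3m)`.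
With `y = 7/20` the sum is at most `(m+1) q^m C(4m, m)` with `q ≈ 8.875`. On the other hand
`C(4m, m) 3^(3m)` is the largest term of `(1 + 3)^(4m)`, so `C(4m, m) ≥ (256/27)^m / (4m+1)`,
and `0.94 · 256/27 ≈ 8.913 > q`; the polynomial factors are absorbed for large `m`.
-/

open Finset Filter Topology

theorem choose_mul_pow_le_one_add_pow {R : Type*} [CommSemiring R] [PartialOrder R]
    [IsOrderedRing R] (n k : ℕ) {a : R} (ha : 0 ≤ a) :
    n.choose k * a ^ k ≤ (1 + a) ^ n := by
  rcases le_or_gt k n with hk | hk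
  · rw [add_comm, add_pow]
    simp only [one_pow, mul_one]
    calc (n.choose k : R) * a ^ k = a ^ k * n.choose k := mul_comm _ _
      _ ≤ ∑ i ∈ range (n + 1), a ^ i * n.choose i :=
        single_le_sum (f := fun i => a ^ i * (n.choose i : R))
          (fun i _ => mul_nonneg (pow_nonneg ha i) (Nat.cast_nonneg _)) (mem_range_succ_iff.mpr hk)
  · simp [Nat.choose_eq_zero_of_lt hk, pow_nonneg (add_nonneg zero_le_one ha)]

theorem choose_mul_choose_mul_pow_le {m n j : ℕ} (hj : j ≤ m) {c y : ℝ} (hc : 0 ≤ c)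
    (hy : 0 ≤ y) :
    m.choose j * n.choose (m - j) * c ^ j * y ^ m ≤ (1 + c * y) ^ m * (1 + y) ^ n := by
  calc (m.choose j : ℝ) * n.choose (m - j) * c ^ j * y ^ m
      = (m.choose j * (c * y) ^ j) * (n.choose (m - j) * y ^ (m - j)) := by
        rw [mul_pow, ← Nat.add_sub_cancel' hj, pow_add, Nat.add_sub_cancel_left]; ring
    _ ≤ (1 + c * y) ^ m * (1 + y) ^ n :=
        mul_le_mul (choose_mul_pow_le_one_add_pow _ _ (by positivity))
          (choose_mul_pow_le_one_add_pow _ _ hy) (by positivity) (by positivity)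

theorem four_mul_choose_pred_le {n m : ℕ} (hn₀ : 0 < n) (hn : n ≤ 4 * m) :
    4 * (n - 1).choose m ≤ 3 * n.choose m := by
  have h := Nat.choose_mul_succ_eq (n - 1) m
  rw [Nat.sub_add_cancel hn₀] at h
  refine Nat.le_of_mul_le_mul_right (c := n) ?_ hn₀
  calc 4 * (n - 1).choose m * n = n.choose m * (4 * (n - m)) := by rw [mul_assoc, h]; ring
    _ ≤ n.choose m * (3 * n) := Nat.mul_le_mul_left _ (by omega)
    _ = 3 * n.choose m * n := by ring

theorem choose_sub_mul_four_pow_le {n m j : ℕ} (hn : n ≤ 4 * m) (hj : j ≤ n) :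
    (n - j).choose m * 4 ^ j ≤ n.choose m * 3 ^ j := by
  induction j with
  | zero => simp
  | succ j ih =>
    calc (n - (j + 1)).choose m * 4 ^ (j + 1) = 4 * (n - j - 1).choose m * 4 ^ j := by
          rw [Nat.sub_succ', pow_succ]; ring
      _ ≤ 3 * (n - j).choose m * 4 ^ j :=
          Nat.mul_le_mul_right _ (four_mul_choose_pred_le (by omega) (by omega))
      _ ≤ 3 * (n.choose m * 3 ^ j) := by
          rw [mul_assoc]; exact Nat.mul_le_mul_left _ (ih (by omega))
      _ = n.choose m * 3 ^ (j + 1) := by ring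

theorem choose_mul_pow_le_choose_succ_mul_pow {n i a : ℕ} (hi : i < n)
    (h : a * (i + 1) + i ≤ n) :
    n.choose i * a ^ (n - i) ≤ n.choose (i + 1) * a ^ (n - (i + 1)) := by
  have hexp : n - i = n - (i + 1) + 1 := by omega
  refine Nat.le_of_mul_le_mul_right (c := i + 1) ?_ i.succ_pos
  calc n.choose i * a ^ (n - i) * (i + 1) = n.choose i * (a * (i + 1)) * a ^ (n - (i + 1)) := by
        rw [hexp, pow_succ]; ring
    _ ≤ n.choose i * (n - i) * a ^ (n - (i + 1)) :=
        Nat.mul_le_mul_right _ (Nat.mul_le_mul_left _ (by omega))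
    _ = n.choose (i + 1) * a ^ (n - (i + 1)) * (i + 1) := by
        rw [← Nat.choose_succ_right_eq]; ring

theorem choose_succ_mul_pow_le_choose_mul_pow {n i a : ℕ} (h : n ≤ a * (i + 1) + i) :
    n.choose (i + 1) * a ^ (n - (i + 1)) ≤ n.choose i * a ^ (n - i) := by
  rcases le_or_gt n i with hi | hi
  · simp [Nat.choose_eq_zero_of_lt (Nat.lt_succ_of_le hi)]
  have hexp : n - i = n - (i + 1) + 1 := by omega
  refine Nat.le_of_mul_le_mul_right (c := i + 1) ?_ i.succ_pos
  calc n.choose (i + 1) * a ^ (n - (i + 1)) * (i + 1)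
        = n.choose i * (n - i) * a ^ (n - (i + 1)) := by rw [← Nat.choose_succ_right_eq]; ring
    _ ≤ n.choose i * (a * (i + 1)) * a ^ (n - (i + 1)) :=
        Nat.mul_le_mul_right _ (Nat.mul_le_mul_left _ (by omega))
    _ = n.choose i * a ^ (n - i) * (i + 1) := by rw [hexp, pow_succ]; ring

theorem choose_mul_pow_sub_le_choose_mul_pow_sub {n k a : ℕ} (hk : k ≤ n)
    (hk₁ : (a + 1) * k ≤ n + 1) (hk₂ : n ≤ (a + 1) * k + a) (i : ℕ) :
    n.choose i * a ^ (n - i) ≤ n.choose k * a ^ (n - k) := by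
  rcases le_or_gt i k with hik | hki
  · induction hik using Nat.decreasingInduction with
    | self => rfl
    | of_succ j hj ih =>
      exact (choose_mul_pow_le_choose_succ_mul_pow (by omega) (by nlinarith)).trans ih
  · induction i, hki using Nat.le_induction with
    | base => exact choose_succ_mul_pow_le_choose_mul_pow (by nlinarith)
    | succ i hi ih =>
      exact (choose_succ_mul_pow_le_choose_mul_pow (by nlinarith)).trans ih

theorem add_one_pow_le_succ_mul_choose_mul_pow {n k a : ℕ} (hk : k ≤ n)
    (hk₁ : (a + 1) * k ≤ n + 1) (hk₂ : n ≤ (a + 1) * k + a) :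
    (a + 1) ^ n ≤ (n + 1) * (n.choose k * a ^ (n - k)) := by
  rw [add_comm, add_pow]
  simpa only [one_pow, one_mul, Nat.cast_id, mul_comm (a ^ _), card_range, smul_eq_mul] using
    sum_le_card_nsmul (range (n + 1)) _ _ fun i _ =>
      choose_mul_pow_sub_le_choose_mul_pow_sub hk hk₁ hk₂ i

theorem pow_le_mul_choose_four_mul (m : ℕ) :
    (256 / 27 : ℝ) ^ m ≤ (4 * m + 1) * (4 * m).choose m := by
  have h := add_one_pow_le_succ_mul_choose_mul_pow (n := 4 * m) (k := m) (a := 3)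
    (by omega) (by omega) (by omega)
  rw [show 4 * m - m = 3 * m by omega] at h
  have h' : ((4 : ℝ) ^ 4) ^ m ≤ (4 * m + 1) * (4 * m).choose m * (3 ^ 3) ^ m := by
    rw [← pow_mul, ← pow_mul, mul_assoc]; exact_mod_cast h
  rw [div_pow, div_le_iff₀ (by positivity)]
  norm_num at h' ⊢
  exact h'

theorem choose_mul_choose_mul_choose_le {m j : ℕ} (hj : j ≤ m) {y : ℝ} (hy : 0 < y) :
    (m.choose j * (3 * m).choose (m - j) * (4 * m - j).choose m : ℝ) ≤
      ((1 + 3 / 4 * y) * (1 + y) ^ 3 / y) ^ m * (4 * m).choose m := by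
  have hratio : ((4 * m - j).choose m : ℝ) ≤ (3 / 4) ^ j * (4 * m).choose m := by
    have h : ((4 * m - j).choose m * 4 ^ j : ℝ) ≤ (4 * m).choose m * 3 ^ j := by
      exact_mod_cast choose_sub_mul_four_pow_le (n := 4 * m) le_rfl (by omega)
    rw [div_pow, div_mul_eq_mul_div, le_div_iff₀ (by positivity)]
    linarith
  have hgen : (m.choose j * (3 * m).choose (m - j) * (3 / 4) ^ j : ℝ) ≤
      ((1 + 3 / 4 * y) * (1 + y) ^ 3 / y) ^ m := by
    rw [div_pow (_ * _), le_div_iff₀ (by positivity), mul_pow, ← pow_mul, mul_comm 3 m]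
    exact choose_mul_choose_mul_pow_le hj (by norm_num) hy.le
  calc (m.choose j * (3 * m).choose (m - j) * (4 * m - j).choose m : ℝ)
      ≤ m.choose j * (3 * m).choose (m - j) * ((3 / 4) ^ j * (4 * m).choose m) := by
        gcongr
    _ ≤ ((1 + 3 / 4 * y) * (1 + y) ^ 3 / y) ^ m * (4 * m).choose m := by
        rw [← mul_assoc]; gcongr

theorem sum_choose_mul_choose_mul_choose_le (m : ℕ) {y : ℝ} (hy : 0 < y) :
    (((range (m + 1)).sum
        (fun j => m.choose j * (3 * m).choose (m - j) * (4 * m - j).choose m) : ℕ) : ℝ) ≤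
      (m + 1) * ((1 + 3 / 4 * y) * (1 + y) ^ 3 / y) ^ m * (4 * m).choose m := by
  push_cast
  simpa only [card_range, nsmul_eq_mul, Nat.cast_add_one, mul_assoc] using
    sum_le_card_nsmul (range (m + 1)) _ _ fun j hj =>
      choose_mul_choose_mul_choose_le (mem_range_succ_iff.mp hj) hy

theorem tendsto_succ_mul_four_mul_add_one_mul_pow {r : ℝ} (hr₀ : 0 ≤ r) (hr₁ : r < 1) :
    Tendsto (fun m : ℕ => ((m : ℝ) + 1) * (4 * m + 1) * r ^ m) atTop (𝓝 0) := by
  have h := ((tendsto_pow_const_mul_const_pow_of_lt_one 2 hr₀ hr₁).const_mul 4).add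
    (((tendsto_pow_const_mul_const_pow_of_lt_one 1 hr₀ hr₁).const_mul 5).add
      (tendsto_pow_atTop_nhds_zero_of_lt_one hr₀ hr₁))
  simp only [mul_zero, add_zero] at h
  refine h.congr fun m => ?_
  ring

theorem prob_bound_q4 :
    ∃ N : ℕ, ∀ m : ℕ, N ≤ m →
      (((Finset.range (m + 1)).sum
          (fun j => (m.choose j) * ((3 * m).choose (m - j)) * ((4 * m - j).choose m)) : ℕ) : ℝ) ≤
        (0.94 : ℝ) ^ m * (((4 * m).choose m : ℝ)) ^ 2 := by
  set q : ℝ := (1 + 3 / 4 * (7 / 20)) * (1 + 7 / 20) ^ 3 / (7 / 20)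
  set r : ℝ := q / (0.94 * (256 / 27))
  have hq : q = r * (0.94 * (256 / 27)) := by simp only [r]; field_simp
  have hr : r < 1 := by norm_num [r, q]
  obtain ⟨N, hN⟩ := eventually_atTop.mp <|
    (tendsto_succ_mul_four_mul_add_one_mul_pow (by positivity) hr).eventually (ge_mem_nhds one_pos)
  refine ⟨N, fun m hm => ?_⟩
  set C : ℝ := ((4 * m).choose m : ℝ)
  calc _ ≤ (m + 1) * q ^ m * C := sum_choose_mul_choose_mul_choose_le m (by norm_num)
    _ = (m + 1) * r ^ m * 0.94 ^ m * (256 / 27) ^ m * C := by rw [hq, mul_pow, mul_pow]; ring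
    _ ≤ (m + 1) * r ^ m * 0.94 ^ m * ((4 * m + 1) * C) * C := by
        gcongr; exact pow_le_mul_choose_four_mul m
    _ = ((m + 1) * (4 * m + 1) * r ^ m) * (0.94 ^ m * C ^ 2) := by ring
    _ ≤ 0.94 ^ m * C ^ 2 := mul_le_of_le_one_left (by positivity) (hN m hm)
end

section
/- There exists N such that for all natural numbers m ≥ N, (Finset.range (2*m+1)).sum (fun j => ((2*m).choose j)^2 * (Finset.range (j+1)).sum (fun i => (j.choose i) * ((4*m−j).choose (2*m−i)) * ((4*m−i).choose (2*m)))) ≤ (0.74 : ℝ)^m * ((4*m).choose (2*m))^3. -/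
/-!
Every binomial coefficient satisfies `C(n, k) ≤ (1 + u) ^ n / u ^ k` for `u > 0`. Applying this to
the four factors of a summand with parameters `a, b, c` chosen so that the factors depending on
`i` and `j` are at most `1`, every summand is at most `h ^ (2m)` with
`h = (1 + a) ^ 2 (1 + c) ^ 4 / c ^ 2`; for `a = 21/25`, `b = 109/200`, `c = 119/100` one gets
`h ^ 2 ≈ 3024 < 0.74 · 16 ^ 3 ≈ 3031`. Since `C(4m, 2m) ≥ 16 ^ m / (4m)`, the remaining
polynomial factors are absorbed by the exponential gap for large `m`.
-/

open Finset Filter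

lemma Nat.cast_choose_le_add_pow_div_pow {u : ℝ} (hu : 0 < u) (n k : ℕ) :
    (n.choose k : ℝ) ≤ (1 + u) ^ n / u ^ k := by
  rw [le_div_iff₀ (pow_pos hu k)]
  rcases le_or_gt k n with hkn | hnk
  · calc (n.choose k : ℝ) * u ^ k = u ^ k * 1 ^ (n - k) * n.choose k := by ring
      _ ≤ ∑ i ∈ range (n + 1), u ^ i * 1 ^ (n - i) * n.choose i :=
        single_le_sum (f := fun i ↦ u ^ i * 1 ^ (n - i) * (n.choose i : ℝ))
          (fun i _ ↦ by positivity) (mem_range.2 (Nat.lt_succ_of_le hkn))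
      _ = (1 + u) ^ n := by rw [← add_pow, add_comm]
  · simp only [Nat.choose_eq_zero_of_lt hnk, Nat.cast_zero, zero_mul]
    positivity

lemma choose_product_le {a b c : ℝ} (ha : 0 < a) (hb : 0 < b) (hc : 0 < c)
    (hab : 1 + b ≤ a ^ 2 * (1 + c)) (hbc : c ≤ b * (1 + c)) {n i j : ℕ} (hij : i ≤ j)
    (hjn : j ≤ n) :
    (n.choose j : ℝ) ^ 2 *
        (j.choose i * (2 * n - j).choose (n - i) * (2 * n - i).choose n) ≤
      ((1 + a) ^ 2 * (1 + c) ^ 4 / c ^ 2) ^ n := by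
  obtain ⟨p, rfl⟩ := Nat.exists_eq_add_of_le hij
  obtain ⟨q, rfl⟩ := Nat.exists_eq_add_of_le hjn
  rw [show 2 * (i + p + q) - (i + p) = i + p + 2 * q by omega,
    show i + p + q - i = p + q by omega, show 2 * (i + p + q) - i = i + 2 * p + 2 * q by omega]
  have hx : (1 + b) / (a ^ 2 * (1 + c)) ≤ 1 := div_le_one_of_le₀ hab (by positivity)
  have hy : c / (b * (1 + c)) ≤ 1 := div_le_one_of_le₀ hbc (by positivity)
  calc _ ≤ ((1 + a) ^ (i + p + q) / a ^ (i + p)) ^ 2 *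
        ((1 + b) ^ (i + p) / b ^ i * ((1 + c) ^ (i + p + 2 * q) / c ^ (p + q)) *
          ((1 + c) ^ (i + 2 * p + 2 * q) / c ^ (i + p + q))) := by
        gcongr <;> exact Nat.cast_choose_le_add_pow_div_pow ‹_› _ _
    _ = ((1 + a) ^ 2 * (1 + c) ^ 4 / c ^ 2) ^ (i + p + q) *
        (((1 + b) / (a ^ 2 * (1 + c))) ^ (i + p) * (c / (b * (1 + c))) ^ i) := by
        simp only [div_pow, mul_pow, ← pow_mul]
        field_simp
        ring
    _ ≤ ((1 + a) ^ 2 * (1 + c) ^ 4 / c ^ 2) ^ (i + p + q) := by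
        apply mul_le_of_le_one_right (by positivity)
        exact mul_le_one₀ (pow_le_one₀ (by positivity) hx) (by positivity)
          (pow_le_one₀ (by positivity) hy)

lemma sum_choose_product_le {a b c : ℝ} (ha : 0 < a) (hb : 0 < b) (hc : 0 < c)
    (hab : 1 + b ≤ a ^ 2 * (1 + c)) (hbc : c ≤ b * (1 + c)) (n : ℕ) :
    (((range (n + 1)).sum fun j ↦ n.choose j ^ 2 * (range (j + 1)).sum fun i ↦
        j.choose i * (2 * n - j).choose (n - i) * (2 * n - i).choose n : ℕ) : ℝ) ≤
      (n + 1) ^ 2 * ((1 + a) ^ 2 * (1 + c) ^ 4 / c ^ 2) ^ n := by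
  set h := (1 + a) ^ 2 * (1 + c) ^ 4 / c ^ 2
  push_cast
  calc _ ≤ ∑ j ∈ range (n + 1), (n + 1 : ℝ) * h ^ n := by
        refine sum_le_sum fun j hj ↦ ?_
        have hjn : j ≤ n := Nat.lt_succ_iff.1 (mem_range.1 hj)
        rw [mul_sum]
        calc _ ≤ ∑ i ∈ range (j + 1), h ^ n := sum_le_sum fun i hi ↦
              choose_product_le ha hb hc hab hbc (Nat.lt_succ_iff.1 (mem_range.1 hi)) hjn
          _ ≤ _ := by
              rw [sum_const, card_range, nsmul_eq_mul]
              gcongr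
              exact_mod_cast Nat.succ_le_succ hjn
    _ = _ := by rw [sum_const, card_range, nsmul_eq_mul]; push_cast; ring

lemma sixteen_pow_div_le_choose {m : ℕ} (hm : 0 < m) :
    (16 : ℝ) ^ m / (4 * m) ≤ (4 * m).choose (2 * m) := by
  have h := Nat.four_pow_le_two_mul_self_mul_centralBinom (2 * m) (by omega)
  rw [Nat.centralBinom_eq_two_mul_choose, show 2 * (2 * m) = 4 * m by ring,
    show 4 ^ (2 * m) = 16 ^ m by rw [pow_mul]; norm_num] at h
  rw [div_le_iff₀ (by positivity), mul_comm]
  exact_mod_cast h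

lemma eventually_const_mul_pow_mul_pow_le_one {r : ℝ} (hr₀ : 0 ≤ r) (hr₁ : r < 1) (C : ℝ)
    (k : ℕ) : ∀ᶠ m : ℕ in atTop, C * ((m : ℝ) ^ k * r ^ m) ≤ 1 := by
  have h := (tendsto_pow_const_mul_const_pow_of_abs_lt_one k
    (abs_lt.2 ⟨by linarith, hr₁⟩)).const_mul C
  rw [mul_zero] at h
  exact h.eventually (ge_mem_nhds zero_lt_one)

theorem prob_bound_t4_q2 :
    ∃ N : ℕ, ∀ m : ℕ, N ≤ m →
      (((Finset.range (2 * m + 1)).sum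
          (fun j => ((2 * m).choose j) ^ 2 *
            (Finset.range (j + 1)).sum
              (fun i => (j.choose i) * ((4 * m - j).choose (2 * m - i)) *
                ((4 * m - i).choose (2 * m)))) : ℕ) : ℝ) ≤
        (0.74 : ℝ) ^ m * (((4 * m).choose (2 * m) : ℝ)) ^ 3 := by
  set h : ℝ := (1 + 21 / 25) ^ 2 * (1 + 119 / 100) ^ 4 / (119 / 100) ^ 2
  set r : ℝ := h ^ 2 / (0.74 * 16 ^ 3)
  obtain ⟨N, hN⟩ := eventually_atTop.1 <|
    eventually_const_mul_pow_mul_pow_le_one (r := r) (by positivity) (by norm_num [r, h]) 576 5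
  refine ⟨N + 1, fun m hm ↦ ?_⟩
  have hm₀ : 0 < m := by omega
  have hS := sum_choose_product_le (a := 21 / 25) (b := 109 / 200) (c := 119 / 100)
    (by norm_num) (by norm_num) (by norm_num) (by norm_num) (by norm_num) (2 * m)
  rw [show 2 * (2 * m) = 4 * m by ring] at hS
  calc _ ≤ ((2 * m : ℕ) + 1 : ℝ) ^ 2 * h ^ (2 * m) := hS
    _ ≤ 9 * m ^ 2 * h ^ (2 * m) := by
        gcongr
        push_cast
        nlinarith [(Nat.one_le_cast (α := ℝ)).2 hm₀]
    _ = 576 * (m ^ 5 * r ^ m) * ((0.74 : ℝ) ^ m * (16 ^ m / (4 * m)) ^ 3) := by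
        simp only [r, div_pow, mul_pow, ← pow_mul]
        field_simp
        ring
    _ ≤ (0.74 : ℝ) ^ m * (16 ^ m / (4 * m)) ^ 3 :=
        mul_le_of_le_one_left (by positivity) (hN m (by omega))
    _ ≤ _ := by gcongr; exact sixteen_pow_div_le_choose hm₀
end

section
/- There exists N such that for all natural numbers m ≥ N and all j, i with 0 ≤ i ≤ j ≤ 2*m, one has ((2*m).choose j)^2 * (j.choose i) * ((4*m−j).choose (2*m−i)) * ((4*m−i).choose (2*m)) ≤ (3050 : ℝ)^m. -/
lemma chernoff_choose (t : ℝ) (ht : 0 ≤ t) (n k : ℕ) (hk : k ≤ n) :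
    (n.choose k : ℝ) * t ^ k ≤ (1 + t) ^ n := by
  have h := add_pow t 1 n
  have hterm : (t ^ k * 1 ^ (n - k) * (n.choose k : ℝ)) ≤
      ∑ s ∈ Finset.range (n + 1), t ^ s * 1 ^ (n - s) * (n.choose s : ℝ) := by
    apply Finset.single_le_sum (f := fun s => t ^ s * 1 ^ (n - s) * (n.choose s : ℝ))
    · intro s _
      positivity
    · simpa using Nat.lt_succ_of_le hk
  calc (n.choose k : ℝ) * t ^ k = t ^ k * 1 ^ (n - k) * (n.choose k : ℝ) := by ring
    _ ≤ ∑ s ∈ Finset.range (n + 1), t ^ s * 1 ^ (n - s) * (n.choose s : ℝ) := hterm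
    _ = (t + 1) ^ n := h.symm
    _ = (1 + t) ^ n := by ring_nf


lemma group_powB (x1 x2 x3 x4 : ℝ) (i b a : ℕ) :
    x1 ^ (i + b + a) * x1 ^ (i + b + a) * x2 ^ (i + b) * x3 ^ (i + b + a + a) *
      x4 ^ (i + b + a + a + b) =
    (x1 ^ 2 * x2 * x3 * x4) ^ i * (x1 ^ 2 * x3 ^ 2 * x4 ^ 2) ^ a *
      (x1 ^ 2 * x2 * x3 * x4 ^ 2) ^ b := by ring

lemma group_powM (s y1 y2 y3 y4 : ℝ) (i b a : ℕ) :
    s ^ (i + b + a) * (y1 ^ (i + b) * y1 ^ (i + b) * y2 ^ i * y3 ^ (a + b) * y4 ^ (i + b + a)) =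
    (s * y1 ^ 2 * y2 * y4) ^ i * (s * y3 * y4) ^ a * (s * y1 ^ 2 * y3 * y4) ^ b := by ring

theorem double_summand_bound_t4 :
    ∃ N : ℕ, ∀ m : ℕ, N ≤ m → ∀ j i : ℕ, i ≤ j → j ≤ 2 * m →
      ((((2 * m).choose j) ^ 2 * (j.choose i) * ((4 * m - j).choose (2 * m - i)) *
          ((4 * m - i).choose (2 * m)) : ℕ) : ℝ) ≤ (3050 : ℝ) ^ m := by
  use 0
  intro m _ j i hij hj
  obtain ⟨b, rfl⟩ : ∃ b, j = i + b := ⟨j - i, by omega⟩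
  obtain ⟨a, ha⟩ : ∃ a, 2 * m = i + b + a := ⟨2 * m - (i + b), by omega⟩
  have e1 : 4 * m - (i + b) = 2 * m + a := by omega
  have e2 : 2 * m - i = a + b := by omega
  have e3 : 4 * m - i = 2 * m + a + b := by omega
  rw [e1, e2, e3]
  push_cast
  have h1 : ((2 * m).choose (i + b) : ℝ) * (839/1000) ^ (i + b) ≤
      (1 + 839/1000) ^ (2 * m) := chernoff_choose _ (by norm_num) _ _ hj
  have h2 : ((i + b).choose i : ℝ) * (27/50) ^ i ≤ (1 + 27/50) ^ (i + b) :=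
    chernoff_choose _ (by norm_num) _ _ (by omega)
  have h3 : ((2 * m + a).choose (a + b) : ℝ) * (5913/5000) ^ (a + b) ≤
      (1 + 5913/5000) ^ (2 * m + a) := chernoff_choose _ (by norm_num) _ _ (by omega)
  have h4 : ((2 * m + a + b).choose (2 * m) : ℝ) * (119/100) ^ (2 * m) ≤
      (1 + 119/100) ^ (2 * m + a + b) := chernoff_choose _ (by norm_num) _ _ (by omega)
  set P : ℝ := ((2 * m).choose (i + b) : ℝ) ^ 2 * ((i + b).choose i : ℝ) *
      ((2 * m + a).choose (a + b) : ℝ) * ((2 * m + a + b).choose (2 * m) : ℝ) with hP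
  set M : ℝ := (839/1000 : ℝ) ^ (i + b) * (839/1000) ^ (i + b) * (27/50) ^ i *
      (5913/5000) ^ (a + b) * (119/100) ^ (2 * m) with hM
  set B : ℝ := (1 + 839/1000 : ℝ) ^ (2 * m) * (1 + 839/1000) ^ (2 * m) *
      (1 + 27/50) ^ (i + b) * (1 + 5913/5000) ^ (2 * m + a) *
      (1 + 119/100) ^ (2 * m + a + b) with hB
  have hMpos : (0 : ℝ) < M := by rw [hM]; positivity
  have step1 : P * M ≤ B := by
    have c1 := mul_le_mul h1 h1 (by positivity) (by positivity)
    have c2 := mul_le_mul c1 h2 (by positivity) (by positivity)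
    have c3 := mul_le_mul c2 h3 (by positivity) (by positivity)
    have c4 := mul_le_mul c3 h4 (by positivity) (by positivity)
    calc P * M = (((2 * m).choose (i + b) : ℝ) * (839/1000) ^ (i + b)) *
          (((2 * m).choose (i + b) : ℝ) * (839/1000) ^ (i + b)) *
          (((i + b).choose i : ℝ) * (27/50) ^ i) *
          (((2 * m + a).choose (a + b) : ℝ) * (5913/5000) ^ (a + b)) *
          (((2 * m + a + b).choose (2 * m) : ℝ) * (119/100) ^ (2 * m)) := by
            rw [hP, hM]; ring
      _ ≤ B := c4
  have step2 : B ≤ (2761/50 : ℝ) ^ (2 * m) * M := by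
    have eB : B = ((1 + 839/1000 : ℝ)^2 * (1 + 27/50) * (1 + 5913/5000) * (1 + 119/100)) ^ i *
        ((1 + 839/1000 : ℝ)^2 * (1 + 5913/5000)^2 * (1 + 119/100)^2) ^ a *
        ((1 + 839/1000 : ℝ)^2 * (1 + 27/50) * (1 + 5913/5000) * (1 + 119/100)^2) ^ b := by
      rw [hB, ha]; exact group_powB _ _ _ _ i b a
    have eM : (2761/50 : ℝ) ^ (2 * m) * M =
        ((2761/50 : ℝ) * (839/1000)^2 * (27/50) * (119/100)) ^ i *
        ((2761/50 : ℝ) * (5913/5000) * (119/100)) ^ a *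
        ((2761/50 : ℝ) * (839/1000)^2 * (5913/5000) * (119/100)) ^ b := by
      rw [hM, ha]; exact group_powM _ _ _ _ _ i b a
    rw [eB, eM]
    have k1 : ((1 + 839/1000 : ℝ)^2 * (1 + 27/50) * (1 + 5913/5000) * (1 + 119/100)) ^ i ≤
        ((2761/50 : ℝ) * (839/1000)^2 * (27/50) * (119/100)) ^ i :=
      pow_le_pow_left₀ (by positivity) (by norm_num) i
    have k2 : ((1 + 839/1000 : ℝ)^2 * (1 + 5913/5000)^2 * (1 + 119/100)^2) ^ a ≤
        ((2761/50 : ℝ) * (5913/5000) * (119/100)) ^ a :=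
      pow_le_pow_left₀ (by positivity) (by norm_num) a
    have k3 : ((1 + 839/1000 : ℝ)^2 * (1 + 27/50) * (1 + 5913/5000) * (1 + 119/100)^2) ^ b ≤
        ((2761/50 : ℝ) * (839/1000)^2 * (5913/5000) * (119/100)) ^ b :=
      pow_le_pow_left₀ (by positivity) (by norm_num) b
    exact mul_le_mul (mul_le_mul k1 k2 (by positivity) (by positivity)) k3
      (by positivity) (by positivity)
  have step3 : (2761/50 : ℝ) ^ (2 * m) ≤ (3050 : ℝ) ^ m := by
    rw [pow_mul]
    exact pow_le_pow_left₀ (by positivity) (by norm_num) m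
  have hfinal : P ≤ (2761/50 : ℝ) ^ (2 * m) :=
    le_of_mul_le_mul_right (le_trans step1 step2) hMpos
  calc ((2 * m).choose (i + b) : ℝ) ^ 2 * ((i + b).choose i : ℝ) *
      ((2 * m + a).choose (a + b) : ℝ) * ((2 * m + a + b).choose (2 * m) : ℝ) = P := rfl
    _ ≤ (2761/50 : ℝ) ^ (2 * m) := hfinal
    _ ≤ (3050 : ℝ) ^ m := step3
end
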